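/- Fix r > 0, let σ(x) = 1/(1+e^{−x}), g_r(c) := σ(1/(rc))σ(−1/(rc))/(rc²) for c > 0, and let x* be the unique positive solution of tanh(1/x) = x. Then there exists c > 0 with g_r(c) > 1 if and only if r > (x*)²/(1−(x*)²). -/

import Mathlib

/-!
With `t = 1/(2rc)`, which runs over `(0, ∞)` as `c` does, the identity
`σ(u)σ(-u) = 1/(4 cosh²(u/2))` turns `g_r(c)` into `r / (cosh t / t)²`, so `g_r(c) > 1` for some
`c > 0` iff `r` exceeds the infimum of `(cosh t / t)²`. The critical point `s` of `cosh t / t`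
satisfies `s sinh s = cosh s`, i.e. `tanh s = 1/s`, so `s = 1/x*`; the tangent line of the convex
function `cosh` at `s` shows that it is the global minimum. Finally `cosh² s = 1/(1 - tanh² s)`
gives `(cosh s / s)² = (x*)²/(1 - (x*)²)`.
-/

/-- The logistic function `σ(x) = 1/(1+e^{-x})`. -/
noncomputable def logistic (x : ℝ) : ℝ := 1 / (1 + Real.exp (-x))

open Real

lemma logistic_mul_logistic_neg (u : ℝ) :
    logistic u * logistic (-u) = (4 * cosh (u / 2) ^ 2)⁻¹ := by
  have hsq : ∀ v : ℝ, exp v = exp (v / 2) ^ 2 := fun v => by rw [← exp_nat_mul]; ring_nf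
  have hinv : exp (u / 2) * exp (-(u / 2)) = 1 := by rw [← exp_add, add_neg_cancel, exp_zero]
  unfold logistic
  rw [cosh_eq, neg_neg, hsq u, hsq (-u), neg_div]
  field_simp
  linear_combination (4 - 4 * exp (u / 2) * exp (-(u / 2))) * hinv

lemma cosh_add_sinh_mul_sub_le_cosh (a b : ℝ) : cosh a + sinh a * (b - a) ≤ cosh b := by
  have tangent : ∀ x y : ℝ, exp x * (1 + (y - x)) ≤ exp y := fun x y => by
    calc exp x * (1 + (y - x)) ≤ exp x * exp (y - x) := by gcongr; linarith [add_one_le_exp (y - x)]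
      _ = exp y := by rw [← exp_add, add_sub_cancel]
  rw [cosh_eq, sinh_eq, cosh_eq]
  linear_combination (tangent a b + tangent (-a) (-b)) / 2

lemma cosh_sq_mul_one_sub_tanh_sq (x : ℝ) : cosh x ^ 2 * (1 - tanh x ^ 2) = 1 := by
  rw [tanh_eq_sinh_div_cosh]
  field_simp
  linear_combination cosh_sq_sub_sinh_sq x

lemma mul_sinh_eq_cosh_of_tanh_eq_inv {s : ℝ} (hs : s ≠ 0) (h : tanh s = s⁻¹) :
    s * sinh s = cosh s := by
  rw [tanh_eq_sinh_div_cosh, div_eq_iff (cosh_pos s).ne'] at h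
  rw [h, mul_inv_cancel_left₀ hs]

lemma cosh_div_le_cosh_div {s t : ℝ} (hs : 0 < s) (ht : 0 < t) (hcrit : s * sinh s = cosh s) :
    cosh s / s ≤ cosh t / t := by
  rw [div_le_div_iff₀ hs ht]
  calc cosh s * t = s * (cosh s + sinh s * (t - s)) := by linear_combination (s - t) * hcrit
    _ ≤ s * cosh t := by gcongr; exact cosh_add_sinh_mul_sub_le_cosh s t
    _ = cosh t * s := mul_comm _ _

lemma cosh_inv_div_inv_sq_of_tanh_inv_eq {x : ℝ} (h : tanh x⁻¹ = x) :
    (cosh x⁻¹ / x⁻¹) ^ 2 = x ^ 2 / (1 - x ^ 2) := by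
  have hc := cosh_sq_mul_one_sub_tanh_sq x⁻¹
  rw [h] at hc
  rw [div_inv_eq_mul, eq_div_iff (left_ne_zero_of_mul_eq_one (by rwa [mul_comm] at hc))]
  linear_combination x ^ 2 * hc

lemma one_lt_logistic_mul_logistic_neg_div_iff {r c : ℝ} (hr : 0 < r) (hc : 0 < c) :
    1 < logistic (1 / (r * c)) * logistic (-(1 / (r * c))) / (r * c ^ 2) ↔
      (cosh (1 / (2 * r * c)) / (1 / (2 * r * c))) ^ 2 < r := by
  have hg : logistic (1 / (r * c)) * logistic (-(1 / (r * c))) / (r * c ^ 2) =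
      r / (cosh (1 / (2 * r * c)) / (1 / (2 * r * c))) ^ 2 := by
    rw [logistic_mul_logistic_neg, show 1 / (r * c) / 2 = 1 / (2 * r * c) by field_simp]
    field_simp
    ring
  rw [hg, one_lt_div (by positivity)]

theorem qER_transition_criterion_general (r : ℝ) (hr : 0 < r)
    (xs : ℝ) (hxs : 0 < xs) (hsol : Real.tanh (1 / xs) = xs) :
    (∃ c : ℝ, 0 < c ∧
        1 < logistic (1 / (r * c)) * logistic (-(1 / (r * c))) / (r * c ^ 2)) ↔
      xs ^ 2 / (1 - xs ^ 2) < r := by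
  rw [one_div] at hsol
  have hs : 0 < xs⁻¹ := inv_pos.mpr hxs
  have hcrit : xs⁻¹ * sinh xs⁻¹ = cosh xs⁻¹ :=
    mul_sinh_eq_cosh_of_tanh_eq_inv hs.ne' (by rw [hsol, inv_inv])
  rw [← cosh_inv_div_inv_sq_of_tanh_inv_eq hsol]
  constructor
  · rintro ⟨c, hc, hgt⟩
    rw [one_lt_logistic_mul_logistic_neg_div_iff hr hc] at hgt
    have hmin := cosh_div_le_cosh_div hs (by positivity : 0 < 1 / (2 * r * c)) hcrit
    exact (pow_le_pow_left₀ (by positivity) hmin 2).trans_lt hgt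
  · intro h
    refine ⟨xs / (2 * r), by positivity, ?_⟩
    rw [one_lt_logistic_mul_logistic_neg_div_iff hr (by positivity)]
    convert h using 4 <;> field_simp

/-- For fixed `r > 0`, with `g_r(c) = σ(1/(rc)) σ(-1/(rc)) / (rc²)` and `x*` the unique
positive solution of `tanh(1/x) = x`, there exists `c > 0` with `g_r(c) > 1` if and
only if `r > (x*)²/(1-(x*)²)`. -/
theorem qER_transition_criterion (r : ℝ) (hr : 0 < r)
    (xs : ℝ) (hxs : 0 < xs) (hsol : Real.tanh (1 / xs) = xs)
    (huniq : ∀ y : ℝ, 0 < y → Real.tanh (1 / y) = y → y = xs) :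
    (∃ c : ℝ, 0 < c ∧
        1 < logistic (1 / (r * c)) * logistic (-(1 / (r * c))) / (r * c ^ 2)) ↔
      xs ^ 2 / (1 - xs ^ 2) < r :=
  qER_transition_criterion_general r hr xs hxs hsol
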